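/- Let G*φ be an HNN extension of G relative to an isomorphism φ: A → B between subgroups A, B ≤ G, with stable letter t. If g_0 t^{ε_1} g_1 t^{ε_2} ⋯ g_{n-1} t^{ε_n} g_n = h_0 t^{η_1} h_1 t^{η_2} ⋯ h_{n-1} t^{η_n} h_n where both sequences are reduced, then ε_i = η_i for all i, and there exists a sequence (c_1, ..., c_n) of elements of A ∪ B such that g_0 = h_0 c_1, g_n = φ^{ε_n}(c_n^{-1}) h_n, g_i = φ^{ε_i}(c_i^{-1}) h_i c_{i+1} for 1 ≤ i ≤ n-1, and c_i ∈ A if ε_i = 1 while c_i ∈ B if ε_i = -1. -/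

import Mathlib

/-!
Abstract model of an HNN extension `G*φ` (with `φ : A → B`, paper convention
`t⁻¹ a t = φ a`): a group `K` with a subgroup `G`, subgroups `A B ≤ G`, and a stable
letter `t : K` conjugating `A` onto `B`, such that `K` is generated by `G` and `t` and
Britton's lemma holds.  Throughout, `φ^ε (x)` is expressed as `(t ^ ε)⁻¹ * x * t ^ ε`.
-/

namespace HNNStmt

variable {K : Type*} [Group K]

/-- The product `g 0 * t ^ ε 1 * g 1 * ⋯ * g (n-1) * t ^ ε n * g n` of an HNN word with
a trailing group element. -/
def wordProd (t : K) {n : ℕ} (g : Fin (n + 1) → K) (ε : Fin n → ℤ) : K :=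
  (List.ofFn (fun i : Fin n => g i.castSucc * t ^ ε i)).prod * g (Fin.last n)

/-- The product `g 0 * t ^ ε 1 * g 1 * ⋯ * g (n-1) * t ^ ε n` of a cyclic HNN word. -/
def cycProd (t : K) {n : ℕ} (g : Fin n → K) (ε : Fin n → ℤ) : K :=
  (List.ofFn (fun i : Fin n => g i * t ^ ε i)).prod

/-- A sequence `(g 0, t ^ ε 1, g 1, …, t ^ ε n, g n)` is *reduced* if it has no
consecutive subsequence `(t⁻¹, gᵢ, t)` with `gᵢ ∈ A` and no `(t, gⱼ, t⁻¹)` with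
`gⱼ ∈ B`. -/
def ReducedWord (A B : Subgroup K) {n : ℕ} (g : Fin (n + 1) → K) (ε : Fin n → ℤ) : Prop :=
  ∀ i : ℕ, ∀ h : i + 1 < n,
    ¬(ε ⟨i, by omega⟩ = -1 ∧ g ⟨i + 1, by omega⟩ ∈ A ∧ ε ⟨i + 1, h⟩ = 1) ∧
    ¬(ε ⟨i, by omega⟩ = 1 ∧ g ⟨i + 1, by omega⟩ ∈ B ∧ ε ⟨i + 1, h⟩ = -1)

/-- A cyclic word `(g 0, t ^ ε 1, …, g (n-1), t ^ ε n)` is *cyclically reduced* if all of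
its cyclic permutations are reduced, i.e. the reducedness condition holds for all
consecutive pairs, cyclically. -/
def CyclicallyReducedWord (A B : Subgroup K) {n : ℕ} (g : Fin n → K) (ε : Fin n → ℤ) :
    Prop :=
  ∀ i : Fin n,
    ¬(ε i = -1 ∧ g ⟨((i : ℕ) + 1) % n, Nat.mod_lt _ i.pos⟩ ∈ A ∧
        ε ⟨((i : ℕ) + 1) % n, Nat.mod_lt _ i.pos⟩ = 1) ∧
    ¬(ε i = 1 ∧ g ⟨((i : ℕ) + 1) % n, Nat.mod_lt _ i.pos⟩ ∈ B ∧
        ε ⟨((i : ℕ) + 1) % n, Nat.mod_lt _ i.pos⟩ = -1)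

/-- Britton's lemma: a reduced word with at least one occurrence of the stable letter
has product `≠ 1`. -/
def BrittonProperty (G A B : Subgroup K) (t : K) : Prop :=
  ∀ (n : ℕ) (g : Fin (n + 1) → K) (ε : Fin n → ℤ), (∀ i, g i ∈ G) →
    (∀ i, ε i = 1 ∨ ε i = -1) → ReducedWord A B g ε → 1 ≤ n → wordProd t g ε ≠ 1

/-- `A` is malnormal in `G`: for `g ∈ G \ A`, `g⁻¹ A g ∩ A = {1}`. -/
def MalnormalIn (A G : Subgroup K) : Prop :=
  ∀ g ∈ G, g ∉ A → ∀ x ∈ A, g⁻¹ * x * g ∈ A → x = 1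

/-!
Peel off the first syllable.  If `w = g₀ t^ε₁ g₁ ⋯` and `w' = h₀ t^η₁ h₁ ⋯` are reduced with
equal products, the word `w'⁻¹ w` has product `1` and is reduced everywhere except possibly at
its junction `(t^(-η₁), h₀⁻¹ g₀, t^ε₁)`; by Britton's lemma that junction is a pinch, i.e.
`ε₁ = η₁` and `c₁ = h₀⁻¹ g₀` lies in `A` (if `ε₁ = 1`) or `B` (if `ε₁ = -1`).  Then
`φ^ε₁ (c₁) ∈ G` can be absorbed into `g₁`, which leaves two shorter reduced words with equal
products.
-/

section Words

variable (t : K) {n : ℕ}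

def wordList (g : Fin (n + 1) → K) (ε : Fin n → ℤ) : List (K × ℤ) :=
  List.ofFn fun i => (g i.castSucc, ε i)

def listProd (l : List (K × ℤ)) : K :=
  (l.map fun p => p.1 * t ^ p.2).prod

lemma listProd_append (l₁ l₂ : List (K × ℤ)) :
    listProd t (l₁ ++ l₂) = listProd t l₁ * listProd t l₂ := by
  simp [listProd]

lemma wordProd_eq_listProd (g : Fin (n + 1) → K) (ε : Fin n → ℤ) :
    wordProd t g ε = listProd t (wordList g ε) * g (Fin.last n) := by
  simp [wordProd, listProd, wordList, List.map_ofFn, Function.comp_def]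

lemma wordProd_zero (g : Fin 1 → K) (ε : Fin 0 → ℤ) : wordProd t g ε = g 0 := by
  simp [wordProd]

lemma wordProd_succ (g : Fin (n + 2) → K) (ε : Fin (n + 1) → ℤ) :
    wordProd t g ε = g 0 * t ^ ε 0 * wordProd t (Fin.tail g) (Fin.tail ε) := by
  simp [wordProd, List.ofFn_succ, Fin.tail, mul_assoc]

lemma wordProd_cons_mul (y x : K) (g : Fin n → K) (ε : Fin n → ℤ) :
    wordProd t (Fin.cons (y * x) g) ε = y * wordProd t (Fin.cons x g) ε := by
  cases n <;> simp [wordProd, List.ofFn_succ, mul_assoc]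

lemma wordProd_eq_mul_prod (g : Fin (n + 1) → K) (ε : Fin n → ℤ) :
    wordProd t g ε = g 0 * (List.ofFn fun i => t ^ ε i * g i.succ).prod := by
  induction n with
  | zero => simp [wordProd]
  | succ n ih => simp [wordProd_succ, ih, List.ofFn_succ, Fin.tail, mul_assoc]

lemma inv_wordProd (g : Fin (n + 1) → K) (ε : Fin n → ℤ) :
    (wordProd t g ε)⁻¹ =
      listProd t (List.ofFn fun i => ((g i.succ)⁻¹, -ε i)).reverse * (g 0)⁻¹ := by
  simp [wordProd_eq_mul_prod, listProd, List.prod_inv_reverse, List.map_reverse,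
    List.map_ofFn, Function.comp_def, zpow_neg]

end Words

section Reduced

variable {A B : Subgroup K} {n : ℕ}

def NoPinch (A B : Subgroup K) (p q : K × ℤ) : Prop :=
  ¬(p.2 = -1 ∧ q.1 ∈ A ∧ q.2 = 1) ∧ ¬(p.2 = 1 ∧ q.1 ∈ B ∧ q.2 = -1)

lemma reducedWord_iff_isChain {g : Fin (n + 1) → K} {ε : Fin n → ℤ} :
    ReducedWord A B g ε ↔ (wordList g ε).IsChain (NoPinch A B) := by
  rw [wordList, List.isChain_ofFn]
  rfl

lemma noPinch_neg_of_not {x c : K} {e f : ℤ} (he : e = 1 ∨ e = -1)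
    (h : ¬(e = f ∧ (e = 1 → c ∈ A) ∧ (e = -1 → c ∈ B))) : NoPinch A B (x, -f) (c, e) := by
  rcases he with rfl | rfl <;> simp only [NoPinch] <;> grind

lemma ReducedWord.tail {g : Fin (n + 2) → K} {ε : Fin (n + 1) → ℤ}
    (hr : ReducedWord A B g ε) : ReducedWord A B (Fin.tail g) (Fin.tail ε) :=
  fun i hi => hr (i + 1) (by omega)

lemma reducedWord_cons_iff {x y : K} {g : Fin n → K} {ε : Fin n → ℤ} :
    ReducedWord A B (Fin.cons x g) ε ↔ ReducedWord A B (Fin.cons y g) ε :=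
  Iff.rfl

lemma ReducedWord.isChain_inv {g : Fin (n + 1) → K} {ε : Fin n → ℤ}
    (hr : ReducedWord A B g ε) :
    (List.ofFn fun i => ((g i.succ)⁻¹, -ε i)).reverse.IsChain (NoPinch A B) := by
  rw [List.isChain_reverse, List.isChain_ofFn]
  intro i hi
  obtain ⟨h₁, h₂⟩ := hr i hi
  simp only [NoPinch, inv_mem_iff, neg_eq_iff_eq_neg] at h₁ h₂ ⊢
  exact ⟨fun ⟨a, b, c⟩ => h₁ ⟨c, b, a⟩, fun ⟨a, b, c⟩ => h₂ ⟨c, b, a⟩⟩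

end Reduced

namespace BrittonProperty

variable {G A B : Subgroup K} {t : K}

lemma listProd_mul_ne_one (britton : BrittonProperty G A B t) {l : List (K × ℤ)} {a : K}
    (hl : l ≠ []) (hG : ∀ p ∈ l, p.1 ∈ G) (hexp : ∀ p ∈ l, p.2 = 1 ∨ p.2 = -1)
    (hred : l.IsChain (NoPinch A B)) (ha : a ∈ G) : listProd t l * a ≠ 1 := by
  set g : Fin (l.length + 1) → K := Fin.snoc (fun i => l[i].1) a
  have hl' : wordList g (fun i => l[i].2) = l := by
    simp [wordList, g, List.ofFn_getElem]
  have hne := britton l.length g (fun i => l[i].2) ?_ (fun i => hexp _ (List.getElem_mem _))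
    (reducedWord_iff_isChain.2 (hl' ▸ hred)) (List.length_pos_iff.2 hl)
  · rw [wordProd_eq_listProd, hl'] at hne
    simpa [g] using hne
  · intro i
    induction i using Fin.lastCases with
    | last => simpa [g] using ha
    | cast i => simpa [g] using hG _ (List.getElem_mem _)

lemma head_eq_of_wordProd_eq (britton : BrittonProperty G A B t) {m n : ℕ}
    {g : Fin (n + 2) → K} {h : Fin (m + 2) → K} {ε : Fin (n + 1) → ℤ} {η : Fin (m + 1) → ℤ}
    (hg : ∀ i, g i ∈ G) (hh : ∀ i, h i ∈ G)
    (hε : ∀ i, ε i = 1 ∨ ε i = -1) (hη : ∀ i, η i = 1 ∨ η i = -1)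
    (hgr : ReducedWord A B g ε) (hhr : ReducedWord A B h η)
    (heq : wordProd t g ε = wordProd t h η) :
    ε 0 = η 0 ∧ (ε 0 = 1 → (h 0)⁻¹ * g 0 ∈ A) ∧ (ε 0 = -1 → (h 0)⁻¹ * g 0 ∈ B) := by
  by_contra hcon
  set g' : Fin (n + 2) → K := Fin.cons ((h 0)⁻¹ * g 0) (Fin.tail g)
  set L := (List.ofFn fun i => ((h i.succ)⁻¹, -η i)).reverse
  have hprod : listProd t (L ++ wordList g' ε) * g' (Fin.last _) = 1 := by
    rw [listProd_append, mul_assoc, ← wordProd_eq_listProd, wordProd_cons_mul,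
      Fin.cons_self_tail, ← mul_assoc, ← inv_wordProd, heq, inv_mul_cancel]
  refine britton.listProd_mul_ne_one (by simp [L]) ?_ ?_ ?_ ?_ hprod
  · simp only [L, wordList, g', List.mem_append, List.mem_reverse, List.mem_ofFn]
    rintro p (⟨i, rfl⟩ | ⟨i, rfl⟩)
    · exact inv_mem (hh _)
    · cases i using Fin.cases with
      | zero => exact mul_mem (inv_mem (hh 0)) (hg 0)
      | succ i => exact hg _
  · simp only [L, wordList, List.mem_append, List.mem_reverse, List.mem_ofFn]
    rintro p (⟨i, rfl⟩ | ⟨i, rfl⟩)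
    · rcases hη i with h | h <;> simp [h]
    · exact hε i
  · rw [List.isChain_append]
    refine ⟨hhr.isChain_inv, reducedWord_iff_isChain.1 ?_, ?_⟩
    · rw [reducedWord_cons_iff, Fin.cons_self_tail]
      exact hgr
    · simp only [L, wordList, g', List.getLast?_reverse, List.ofFn_succ, List.head?_cons,
        Option.mem_def, Option.some.injEq]
      rintro _ rfl _ rfl
      exact noPinch_neg_of_not (hε 0) hcon
  · exact hg (Fin.last _)

end BrittonProperty

section Equiv

variable {A B : Subgroup K} {t : K} {n : ℕ}

/-- `c (i - 1)` plays the role of the paper's `cᵢ`, and `c n = 1` is padding. -/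
def WordEquiv (A B : Subgroup K) (t : K) (g h : Fin (n + 1) → K) (ε η : Fin n → ℤ) : Prop :=
  (∀ i, ε i = η i) ∧
    ∃ c : Fin (n + 1) → K, c (Fin.last n) = 1 ∧
      (∀ i : Fin n, (ε i = 1 → c i.castSucc ∈ A) ∧ (ε i = -1 → c i.castSucc ∈ B)) ∧
      g 0 = h 0 * c 0 ∧
      (∀ i : Fin n,
        g i.succ = (t ^ ε i)⁻¹ * (c i.castSucc)⁻¹ * t ^ ε i * h i.succ * c i.succ)

lemma wordEquiv_zero {g h : Fin 1 → K} {ε η : Fin 0 → ℤ} (heq : g 0 = h 0) :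
    WordEquiv A B t g h ε η :=
  ⟨finZeroElim, fun _ => 1, rfl, finZeroElim, by simpa using heq, finZeroElim⟩

lemma WordEquiv.cons {g h : Fin (n + 2) → K} {ε η : Fin (n + 1) → ℤ} (he : ε 0 = η 0)
    (hcA : ε 0 = 1 → (h 0)⁻¹ * g 0 ∈ A) (hcB : ε 0 = -1 → (h 0)⁻¹ * g 0 ∈ B)
    (htail : WordEquiv A B t
      (Fin.cons ((t ^ ε 0)⁻¹ * ((h 0)⁻¹ * g 0) * t ^ ε 0 * g 1) (Fin.tail (Fin.tail g)))
      (Fin.tail h) (Fin.tail ε) (Fin.tail η)) :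
    WordEquiv A B t g h ε η := by
  obtain ⟨hεη, c, hc_last, hc_mem, hc_zero, hc_succ⟩ := htail
  refine ⟨Fin.cases he hεη, Fin.cons ((h 0)⁻¹ * g 0) c, ?_, ?_, by simp, ?_⟩
  · simpa using hc_last
  · intro i
    cases i using Fin.cases with
    | zero => simpa using ⟨hcA, hcB⟩
    | succ i => simpa [Fin.tail] using hc_mem i
  · intro i
    cases i using Fin.cases with
    | zero =>
      simp only [Fin.cons_zero, Fin.tail, Fin.succ_zero_eq_one] at hc_zero
      simp only [Fin.castSucc_zero, Fin.cons_zero, Fin.succ_zero_eq_one, Fin.cons_one]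
      rw [mul_assoc _ (h 1), ← hc_zero]
      group
    | succ i => simpa [Fin.tail] using hc_succ i

end Equiv

lemma conj_zpow_mem {G A B : Subgroup K} {t c : K} {e : ℤ} (hA : A ≤ G) (hB : B ≤ G)
    (ht : ∀ a ∈ A, t⁻¹ * a * t ∈ B) (ht' : ∀ b ∈ B, t * b * t⁻¹ ∈ A)
    (he : e = 1 ∨ e = -1) (hcA : e = 1 → c ∈ A) (hcB : e = -1 → c ∈ B) :
    (t ^ e)⁻¹ * c * t ^ e ∈ G := by
  rcases he with rfl | rfl
  · simpa using hB (ht c (hcA rfl))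
  · simpa using hA (ht' c (hcB rfl))

theorem statement6_general (G A B : Subgroup K) (t : K) (hA : A ≤ G) (hB : B ≤ G)
    (ht : ∀ a ∈ A, t⁻¹ * a * t ∈ B) (ht' : ∀ b ∈ B, t * b * t⁻¹ ∈ A)
    (britton : BrittonProperty G A B t)
    {n : ℕ} (g h : Fin (n + 1) → K) (ε η : Fin n → ℤ)
    (hg : ∀ i, g i ∈ G) (hh : ∀ i, h i ∈ G)
    (hε : ∀ i, ε i = 1 ∨ ε i = -1) (hη : ∀ i, η i = 1 ∨ η i = -1)
    (hgr : ReducedWord A B g ε) (hhr : ReducedWord A B h η)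
    (heq : wordProd t g ε = wordProd t h η) :
    (∀ i, ε i = η i) ∧
    ∃ c : Fin (n + 1) → K, c (Fin.last n) = 1 ∧
      (∀ i : Fin n, (ε i = 1 → c i.castSucc ∈ A) ∧ (ε i = -1 → c i.castSucc ∈ B)) ∧
      g 0 = h 0 * c 0 ∧
      (∀ i : Fin n,
        g i.succ = (t ^ ε i)⁻¹ * (c i.castSucc)⁻¹ * t ^ ε i * h i.succ * c i.succ) := by
  induction n with
  | zero => exact wordEquiv_zero (by simpa [wordProd_zero] using heq)
  | succ n ih =>
    obtain ⟨he, hcA, hcB⟩ := britton.head_eq_of_wordProd_eq hg hh hε hη hgr hhr heq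
    have hd : (t ^ ε 0)⁻¹ * ((h 0)⁻¹ * g 0) * t ^ ε 0 ∈ G :=
      conj_zpow_mem hA hB ht ht' (hε 0) hcA hcB
    have htail : (Fin.cons (g 1) (Fin.tail (Fin.tail g)) : Fin (n + 1) → K) = Fin.tail g :=
      Fin.cons_self_tail (Fin.tail g)
    refine WordEquiv.cons he hcA hcB (ih _ _ _ _ (Fin.cons (mul_mem hd (hg 1)) fun i => hg _)
      (fun i => hh _) (fun i => hε _) (fun i => hη _) ?_ hhr.tail ?_)
    · exact reducedWord_cons_iff.2 (htail ▸ hgr.tail)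
    · rw [wordProd_succ, wordProd_succ, ← he] at heq
      rw [wordProd_cons_mul, htail, ← inv_mul_eq_iff_eq_mul.2 heq]
      group

/-- If two reduced HNN words (with trailing group elements) have equal
products, then their exponent sequences agree, and the group elements differ by a
sequence `(c 1, …, c n)` with `c i ∈ A` if `ε i = 1` and `c i ∈ B` if `ε i = -1`:
`g 0 = h 0 * c 1`, `g i = φ^(ε i) (c i⁻¹) * h i * c (i+1)` for `1 ≤ i ≤ n - 1`, and
`g n = φ^(ε n) (c n⁻¹) * h n`.  Here `φ^ε (x) = (t ^ ε)⁻¹ * x * t ^ ε`, the sequence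
`c` is indexed by `Fin (n+1)` with `c (i-1)` standing for the paper's `cᵢ`, and is
padded by the sentinel value `c n = 1`. -/
theorem statement6 (G A B : Subgroup K) (t : K) (hA : A ≤ G) (hB : B ≤ G)
    (ht : ∀ a ∈ A, t⁻¹ * a * t ∈ B) (ht' : ∀ b ∈ B, t * b * t⁻¹ ∈ A)
    (hgen : Subgroup.closure (insert t (G : Set K)) = ⊤)
    (britton : BrittonProperty G A B t)
    {n : ℕ} (g h : Fin (n + 1) → K) (ε η : Fin n → ℤ)
    (hg : ∀ i, g i ∈ G) (hh : ∀ i, h i ∈ G)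
    (hε : ∀ i, ε i = 1 ∨ ε i = -1) (hη : ∀ i, η i = 1 ∨ η i = -1)
    (hgr : ReducedWord A B g ε) (hhr : ReducedWord A B h η)
    (heq : wordProd t g ε = wordProd t h η) :
    (∀ i, ε i = η i) ∧
    ∃ c : Fin (n + 1) → K, c (Fin.last n) = 1 ∧
      (∀ i : Fin n, (ε i = 1 → c i.castSucc ∈ A) ∧ (ε i = -1 → c i.castSucc ∈ B)) ∧
      g 0 = h 0 * c 0 ∧
      (∀ i : Fin n,
        g i.succ = (t ^ ε i)⁻¹ * (c i.castSucc)⁻¹ * t ^ ε i * h i.succ * c i.succ) :=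
  statement6_general G A B t hA hB ht ht' britton g h ε η hg hh hε hη hgr hhr heq

end HNNStmt
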